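/- arXiv:1310.1269 — 2 statements merged into one kernel-verified Lean document; each statement's English description precedes it below -/
import Mathlib

section
/- Let Γ be a connected metric graph of first Betti number b ≥ 2 and total length b. Then there exist b homologically independent loops in Γ all based at the same point, each of length at most 2b. -/
/-- A metric graph: a finite graph (multiple edges and loops allowed) with a
nonnegative length assigned to each edge. -/
structure MGraph where
  V : Type
  E : Type
  fV : Fintype V
  fE : Fintype E
  deV : DecidableEq V
  deE : DecidableEq E
  s : E → V
  t : E → V
  len : E → ℝ
  len_nonneg : ∀ e, 0 ≤ len e

attribute [instance] MGraph.fV MGraph.fE MGraph.deV MGraph.deE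

namespace MGraph

variable (G : MGraph)

/-- The total length (one-dimensional Hausdorff measure) of the metric graph. -/
def totalLength : ℝ := ∑ e, G.len e

/-- A dart is an edge together with an orientation. -/
def dstart (d : G.E × Bool) : G.V := if d.2 then G.s d.1 else G.t d.1

def dend (d : G.E × Bool) : G.V := if d.2 then G.t d.1 else G.s d.1

/-- `G.IsWalk u v l` : the list of darts `l` is a walk from `u` to `v`. -/
def IsWalk : G.V → G.V → List (G.E × Bool) → Prop
  | u, v, [] => u = v
  | u, v, d :: l => G.dstart d = u ∧ IsWalk (G.dend d) v l

/-- The length of a walk. -/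
def walkLen (l : List (G.E × Bool)) : ℝ := (l.map fun d => G.len d.1).sum

/-- The real cycle vector of a closed walk: its class in `H₁(Γ, ℝ) ⊆ ℝ^E`, recording
the signed number of times each edge is traversed. A family of loops is homologically
independent iff their cycle vectors are linearly independent. -/
def cycVec (l : List (G.E × Bool)) : G.E → ℝ := fun e =>
  (l.map fun d => if d.1 = e then (if d.2 then (1 : ℝ) else -1) else 0).sum

/-- The graph is connected. -/
def Connected : Prop := ∀ u v : G.V, ∃ l, G.IsWalk u v l

/-- `G.bettiEq b` : the first Betti number `e - v + 1` of the connected graph `G`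
equals `b`. -/
def bettiEq (b : ℕ) : Prop :=
  (Fintype.card G.E : ℤ) - (Fintype.card G.V : ℤ) + 1 = (b : ℤ)

/-- The path distance between two vertices. -/
noncomputable def vdist (u v : G.V) : ℝ :=
  sInf {x | ∃ l, G.IsWalk u v l ∧ G.walkLen l = x}

/-- The list of vertices visited by a walk. -/
def walkVerts (l : List (G.E × Bool)) : List G.V := l.map G.dstart

/-- The distance from a vertex to a (nonempty) walk. -/
noncomputable def distToWalk (x : G.V) (l : List (G.E × Bool)) : ℝ :=
  sInf {d | ∃ v ∈ G.walkVerts l, G.vdist x v = d}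

/-- The distance between two loops. -/
noncomputable def loopDist (l₁ l₂ : List (G.E × Bool)) : ℝ :=
  sInf {d | ∃ u ∈ G.walkVerts l₁, ∃ v ∈ G.walkVerts l₂, G.vdist u v = d}

/-- A simple loop (embedded circle): a nonempty closed walk repeating no edge and
no vertex. -/
def IsSimpleLoop (l : List (G.E × Bool)) : Prop :=
  l ≠ [] ∧ (∃ v, G.IsWalk v v l) ∧ (l.map Prod.fst).Nodup ∧ (G.walkVerts l).Nodup

end MGraph

/-!
Grow a spanning tree `T` from a base point `x`: it has fewer than `|V|` edges, so at least `b`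
edges lie outside it. Each such edge `e` closes a fundamental cycle at `x` (a trail in `T` to one
end of `e`, then `e`, then a trail in `T` back from the other end) of length at most
`2 len(T) + len(e) ≤ 2 len(Γ) = 2b`. Among the edges outside `T` this cycle traverses only `e`, and
only once, so the cycle vectors evaluated at these edges form the identity matrix.
-/

namespace MGraph

variable {G : MGraph}

lemma IsWalk.append {u v w : G.V} {l₁ l₂ : List (G.E × Bool)}
    (h₁ : G.IsWalk u v l₁) (h₂ : G.IsWalk v w l₂) : G.IsWalk u w (l₁ ++ l₂) := by
  induction l₁ generalizing u with
  | nil => exact (h₁ : u = v) ▸ h₂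
  | cons d l ih => exact ⟨h₁.1, ih h₁.2⟩

lemma IsWalk.of_append {u w : G.V} {l₁ l₂ : List (G.E × Bool)}
    (h : G.IsWalk u w (l₁ ++ l₂)) : ∃ v, G.IsWalk u v l₁ ∧ G.IsWalk v w l₂ := by
  induction l₁ generalizing u with
  | nil => exact ⟨u, rfl, h⟩
  | cons d l ih =>
    obtain ⟨v, h₁, h₂⟩ := ih h.2
    exact ⟨v, ⟨h.1, h₁⟩, h₂⟩

def flip (d : G.E × Bool) : G.E × Bool := (d.1, !d.2)

lemma dstart_flip (d : G.E × Bool) : G.dstart (flip d) = G.dend d := by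
  cases d with | mk e b => cases b <;> rfl

lemma dend_flip (d : G.E × Bool) : G.dend (flip d) = G.dstart d := by
  cases d with | mk e b => cases b <;> rfl

variable (G) in
def reverseWalk (l : List (G.E × Bool)) : List (G.E × Bool) := (l.map flip).reverse

lemma IsWalk.reverse {u v : G.V} {l : List (G.E × Bool)} (h : G.IsWalk u v l) :
    G.IsWalk v u (G.reverseWalk l) := by
  induction l generalizing u with
  | nil => exact (h : u = v).symm
  | cons d l ih =>
    have hrev : G.reverseWalk (d :: l) = G.reverseWalk l ++ [flip d] := by
      simp [reverseWalk]
    rw [hrev]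
    exact (ih h.2).append ⟨dstart_flip d, (dend_flip d).trans h.1⟩

lemma map_fst_reverseWalk (l : List (G.E × Bool)) :
    (G.reverseWalk l).map Prod.fst = (l.map Prod.fst).reverse := by
  simp [reverseWalk, flip, Function.comp_def]

lemma walkLen_eq_sum_fst (l : List (G.E × Bool)) :
    G.walkLen l = ((l.map Prod.fst).map G.len).sum := by
  simp [walkLen, Function.comp_def]

lemma walkLen_reverseWalk (l : List (G.E × Bool)) :
    G.walkLen (G.reverseWalk l) = G.walkLen l := by
  simp only [walkLen_eq_sum_fst, map_fst_reverseWalk, List.map_reverse, List.sum_reverse]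

lemma walkLen_append (l₁ l₂ : List (G.E × Bool)) :
    G.walkLen (l₁ ++ l₂) = G.walkLen l₁ + G.walkLen l₂ := by
  simp [walkLen]

lemma walkLen_cons (d : G.E × Bool) (l : List (G.E × Bool)) :
    G.walkLen (d :: l) = G.len d.1 + G.walkLen l := by
  simp [walkLen]

lemma walkLen_le_sum_of_nodup {l : List (G.E × Bool)} {T : Finset G.E}
    (hnd : (l.map Prod.fst).Nodup) (hT : ∀ d ∈ l, d.1 ∈ T) :
    G.walkLen l ≤ ∑ e ∈ T, G.len e := by
  rw [walkLen_eq_sum_fst, ← List.sum_toFinset _ hnd]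
  refine Finset.sum_le_sum_of_subset_of_nonneg ?_ fun e _ _ => G.len_nonneg e
  intro e he
  obtain ⟨d, hd, rfl⟩ := List.mem_map.mp (List.mem_toFinset.mp he)
  exact hT d hd

lemma cycVec_append (l₁ l₂ : List (G.E × Bool)) (e : G.E) :
    G.cycVec (l₁ ++ l₂) e = G.cycVec l₁ e + G.cycVec l₂ e := by
  simp [cycVec]

lemma cycVec_cons (d : G.E × Bool) (l : List (G.E × Bool)) (e : G.E) :
    G.cycVec (d :: l) e = (if d.1 = e then (if d.2 then 1 else -1) else 0) + G.cycVec l e := by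
  simp [cycVec]

lemma cycVec_eq_zero {l : List (G.E × Bool)} {e : G.E} (h : e ∉ l.map Prod.fst) :
    G.cycVec l e = 0 := by
  refine List.sum_eq_zero fun x hx => ?_
  obtain ⟨d, hd, rfl⟩ := List.mem_map.mp hx
  rw [if_neg fun hde => h (List.mem_map.mpr ⟨d, hd, hde⟩)]

-- Cut out the stretch between the first dart and the next use of its edge.
lemma IsWalk.exists_shortcut {u v : G.V} {d : G.E × Bool} {l : List (G.E × Bool)}
    (h : G.IsWalk u v (d :: l)) (hd : d.1 ∈ l.map Prod.fst) :
    ∃ l', G.IsWalk u v l' ∧ l'.Sublist (d :: l) ∧ l'.length < (d :: l).length := by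
  obtain ⟨d', hd', hfst⟩ := List.mem_map.mp hd
  obtain ⟨l₁, l₂, rfl⟩ := List.append_of_mem hd'
  obtain ⟨w, -, hw⟩ := IsWalk.of_append h.2
  have hsub : l₂.Sublist (l₁ ++ d' :: l₂) :=
    (List.sublist_cons_self d' l₂).trans (List.sublist_append_right l₁ _)
  by_cases hsnd : d'.2 = d.2
  · obtain rfl : d' = d := Prod.ext hfst hsnd
    exact ⟨d' :: l₂, ⟨h.1, hw.2⟩, hsub.cons_cons d', by simp⟩
  · have hflip : d' = flip d := Prod.ext hfst (by cases h : d.2 <;> simp_all [flip])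
    refine ⟨l₂, ?_, hsub.cons d, by simp only [List.length_cons, List.length_append]; omega⟩
    simpa only [hflip, dend_flip, h.1] using hw.2

lemma IsWalk.exists_trail {u v : G.V} {l : List (G.E × Bool)} (h : G.IsWalk u v l) :
    ∃ l', G.IsWalk u v l' ∧ (l'.map Prod.fst).Nodup ∧ l'.Sublist l := by
  match l with
  | [] => exact ⟨[], h, List.nodup_nil, List.Sublist.refl _⟩
  | d :: l =>
    by_cases hd : d.1 ∈ l.map Prod.fst
    · obtain ⟨l', h', hsub, hlt⟩ := h.exists_shortcut hd
      obtain ⟨l'', h'', hnd, hsub'⟩ := h'.exists_trail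
      exact ⟨l'', h'', hnd, hsub'.trans hsub⟩
    · obtain ⟨l', h', hnd, hsub⟩ := h.2.exists_trail
      refine ⟨d :: l', ⟨h.1, h'⟩, ?_, hsub.cons_cons d⟩
      exact List.nodup_cons.mpr ⟨fun hmem => hd ((hsub.map Prod.fst).subset hmem), hnd⟩
termination_by l.length
decreasing_by all_goals simp only [List.length_cons] at *; omega

variable (G) in
def ReachableVia (T : Finset G.E) (x v : G.V) : Prop :=
  ∃ l, G.IsWalk x v l ∧ ∀ d ∈ l, d.1 ∈ T

lemma ReachableVia.mono {T T' : Finset G.E} (hTT' : T ⊆ T') {x v : G.V}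
    (h : G.ReachableVia T x v) : G.ReachableVia T' x v :=
  let ⟨l, hl, hT⟩ := h
  ⟨l, hl, fun d hd => hTT' (hT d hd)⟩

lemma ReachableVia.exists_walkLen_le {T : Finset G.E} {x v : G.V} (h : G.ReachableVia T x v) :
    ∃ l, G.IsWalk x v l ∧ (∀ d ∈ l, d.1 ∈ T) ∧ G.walkLen l ≤ ∑ e ∈ T, G.len e := by
  obtain ⟨l, hl, hT⟩ := h
  obtain ⟨l', hl', hnd, hsub⟩ := hl.exists_trail
  have hT' : ∀ d ∈ l', d.1 ∈ T := fun d hd => hT d (hsub.subset hd)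
  exact ⟨l', hl', hT', walkLen_le_sum_of_nodup hnd hT'⟩

lemma IsWalk.exists_dart_leaving {R : Finset G.V} {u v : G.V} {l : List (G.E × Bool)}
    (h : G.IsWalk u v l) (hu : u ∈ R) (hv : v ∉ R) :
    ∃ d ∈ l, G.dstart d ∈ R ∧ G.dend d ∉ R := by
  induction l generalizing u with
  | nil => exact absurd ((h : u = v) ▸ hu) hv
  | cons d l ih =>
    by_cases hd : G.dend d ∈ R
    · obtain ⟨d', hd', hR⟩ := ih h.2 hd
      exact ⟨d', List.mem_cons_of_mem _ hd', hR⟩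
    · exact ⟨d, List.mem_cons_self, h.1 ▸ hu, hd⟩

lemma exists_reachableVia_insert (hconn : G.Connected) {x : G.V} {R : Finset G.V}
    {T : Finset G.E} (hx : x ∈ R) (hR : R ≠ Finset.univ) (hT : ∀ v ∈ R, G.ReachableVia T x v) :
    ∃ w ∉ R, ∃ e, ∀ v ∈ insert w R, G.ReachableVia (insert e T) x v := by
  obtain ⟨w, hw⟩ : ∃ w, w ∉ R := by simpa [Finset.eq_univ_iff_forall] using hR
  obtain ⟨l, hl⟩ := hconn x w
  obtain ⟨d, -, hdR, hdR'⟩ := hl.exists_dart_leaving hx hw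
  refine ⟨G.dend d, hdR', d.1, fun v hv => ?_⟩
  rcases Finset.mem_insert.mp hv with rfl | hv
  · obtain ⟨p, hp, hpT⟩ := hT _ hdR
    refine ⟨p ++ [d], hp.append ⟨rfl, rfl⟩, fun d' hd' => ?_⟩
    rcases List.mem_append.mp hd' with hd' | hd'
    · exact Finset.mem_insert_of_mem (hpT d' hd')
    · rw [List.mem_singleton.mp hd']
      exact Finset.mem_insert_self _ _
  · exact (hT v hv).mono (Finset.subset_insert _ _)

lemma exists_spanning_edges (hconn : G.Connected) (x : G.V) :
    ∃ T : Finset G.E, T.card < Fintype.card G.V ∧ ∀ v, G.ReachableVia T x v := by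
  classical
  let good : Finset (Finset G.V) := Finset.univ.filter fun R =>
    x ∈ R ∧ ∃ T : Finset G.E, T.card < R.card ∧ ∀ v ∈ R, G.ReachableVia T x v
  have hx : {x} ∈ good := by
    refine Finset.mem_filter.mpr ⟨Finset.mem_univ _, Finset.mem_singleton_self x, ∅, by simp, ?_⟩
    intro v hv
    exact ⟨[], (Finset.mem_singleton.mp hv).symm, by simp⟩
  obtain ⟨R, hR, hmax⟩ := good.exists_max_image Finset.card ⟨_, hx⟩
  obtain ⟨-, hxR, T, hTR, hT⟩ := Finset.mem_filter.mp hR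
  by_cases hRu : R = Finset.univ
  · subst hRu
    exact ⟨T, hTR, fun v => hT v (Finset.mem_univ v)⟩
  · obtain ⟨w, hw, e, hwe⟩ := exists_reachableVia_insert hconn hxR hRu hT
    have hbig : insert w R ∈ good := by
      refine Finset.mem_filter.mpr ⟨Finset.mem_univ _, Finset.mem_insert_of_mem hxR,
        insert e T, ?_, hwe⟩
      rw [Finset.card_insert_of_notMem hw]
      exact (Finset.card_insert_le e T).trans_lt (Nat.succ_lt_succ hTR)
    have := hmax _ hbig
    rw [Finset.card_insert_of_notMem hw] at this
    omega

lemma exists_fundamental_cycle {T : Finset G.E} {x : G.V} (hT : ∀ v, G.ReachableVia T x v)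
    {e : G.E} (he : e ∉ T) :
    ∃ c, G.IsWalk x x c ∧ G.walkLen c ≤ 2 * G.totalLength ∧
      ∀ e' ∉ T, G.cycVec c e' = (Pi.single e 1 : G.E → ℝ) e' := by
  obtain ⟨p, hp, hpT, hpLen⟩ := (hT (G.s e)).exists_walkLen_le
  obtain ⟨q, hq, hqT, hqLen⟩ := (hT (G.t e)).exists_walkLen_le
  refine ⟨p ++ (e, true) :: G.reverseWalk q, hp.append ⟨rfl, hq.reverse⟩, ?_, ?_⟩
  · have hlenT : ∑ e ∈ T, G.len e ≤ G.totalLength :=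
      Finset.sum_le_univ_sum_of_nonneg G.len_nonneg
    have hlenTe : G.len e + ∑ e ∈ T, G.len e ≤ G.totalLength := by
      rw [← Finset.sum_insert he]
      exact Finset.sum_le_univ_sum_of_nonneg G.len_nonneg
    rw [walkLen_append, walkLen_cons, walkLen_reverseWalk]
    linarith
  · intro e' he'
    have hnot : ∀ l : List (G.E × Bool), (∀ d ∈ l, d.1 ∈ T) → e' ∉ l.map Prod.fst := by
      intro l hl hmem
      obtain ⟨d, hd, rfl⟩ := List.mem_map.mp hmem
      exact he' (hl d hd)
    have hq' : e' ∉ (G.reverseWalk q).map Prod.fst := by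
      simpa [map_fst_reverseWalk] using hnot q hqT
    rw [cycVec_append, cycVec_cons, cycVec_eq_zero (hnot p hpT), cycVec_eq_zero hq',
      Pi.single_apply]
    simp [eq_comm]

end MGraph

lemma linearIndependent_of_apply_eq_single {ι κ R : Type*} [Semiring R] [DecidableEq ι]
    {v : ι → κ → R} (f : ι → κ) (h : ∀ i j, v i (f j) = (Pi.single i 1 : ι → R) j) :
    LinearIndependent R v :=
  LinearIndependent.of_comp (LinearMap.funLeft R R f) <| by
    convert Pi.linearIndependent_single_one ι R using 1
    funext i j
    exact h i j

theorem betti_loops_based_at_same_point_general (G : MGraph) (b : ℕ)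
    (hconn : G.Connected) (hbetti : G.bettiEq b) (hlen : G.totalLength = b) :
    ∃ (x : G.V) (c : Fin b → List (G.E × Bool)),
      (∀ i, G.IsWalk x x (c i)) ∧
      (∀ i, G.walkLen (c i) ≤ 2 * b) ∧
      LinearIndependent ℝ (fun i => G.cycVec (c i)) := by
  have hV : Nonempty G.V := by
    by_contra hV
    rw [not_nonempty_iff] at hV
    have : IsEmpty G.E := ⟨fun e => hV.false (G.s e)⟩
    simp only [MGraph.bettiEq, MGraph.totalLength, Fintype.card_eq_zero, Finset.univ_eq_empty,
      Finset.sum_empty] at hbetti hlen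
    norm_cast at hlen
    omega
  obtain ⟨x⟩ := hV
  obtain ⟨T, hTcard, hT⟩ := MGraph.exists_spanning_edges hconn x
  obtain ⟨f⟩ : Nonempty (Fin b ↪ (Tᶜ : Finset G.E)) := by
    refine Function.Embedding.nonempty_of_card_le ?_
    rw [Fintype.card_fin, Fintype.card_coe, Finset.card_compl]
    have := Finset.card_le_univ T
    unfold MGraph.bettiEq at hbetti
    omega
  have hf : ∀ i, (f i : G.E) ∉ T := fun i => Finset.mem_compl.mp (f i).2
  choose c hc hcLen hcVec using fun i => MGraph.exists_fundamental_cycle hT (hf i)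
  refine ⟨x, c, hc, fun i => hlen ▸ hcLen i,
    linearIndependent_of_apply_eq_single (fun j => (f j : G.E)) fun i j => ?_⟩
  simp only [hcVec i _ (hf j), Pi.single_apply, Subtype.val_injective.eq_iff, f.injective.eq_iff]

/-- Let `Γ` be a connected metric graph of first Betti number `b ≥ 2`
and total length `b`. Then there exist `b` homologically independent loops in `Γ`
all based at the same point, each of length at most `2b`. -/
theorem betti_loops_based_at_same_point (G : MGraph) (b : ℕ) (hb : 2 ≤ b)
    (hconn : G.Connected) (hbetti : G.bettiEq b) (hlen : G.totalLength = b) :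
    ∃ (x : G.V) (c : Fin b → List (G.E × Bool)),
      (∀ i, G.IsWalk x x (c i)) ∧
      (∀ i, G.walkLen (c i) ≤ 2 * b) ∧
      LinearIndependent ℝ (fun i => G.cycVec (c i)) :=
  betti_loops_based_at_same_point_general G b hconn hbetti hlen
end

section
/- In the graph Γ_⋆ (q bouquets of p circles and one bouquet of r circles joined to a center v by edges of length L), any family of homologically independent loops based at a common point each of length at most 2L has cardinality at most p + r, which is at most 2p − 1. -/
/-- The graph `Γ_⋆` of the paper: a central vertex `0`, bouquet vertices `1,...,q+1`;
for `i = 1,...,q` the bouquet `X_i` consists of `p` circles of length `l/p` each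
(total length `l`) at vertex `i`, joined to the center by an edge of length `L`;
the bouquet `X_{q+1}` consists of `r` circles of length `1/2` each at vertex `q+1`,
joined to the center by an edge of length `r/2`, so that
`length(X_{q+1}) + length(w_{q+1}) = r`. -/
noncomputable def starGraph (p q r : ℕ) (L l : ℝ) (hL : 0 ≤ L) (hl : 0 ≤ l) :
    MGraph where
  V := Fin (q + 2)
  E := (Fin q × Fin p) ⊕ (Fin r ⊕ Fin (q + 1))
  fV := inferInstance
  fE := inferInstance
  deV := inferInstance
  deE := inferInstance
  s := fun e =>
    match e with
    | .inl (i, _) => ⟨i.1 + 1, by have := i.2; omega⟩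
    | .inr (.inl _) => ⟨q + 1, by omega⟩
    | .inr (.inr _) => ⟨0, by omega⟩
  t := fun e =>
    match e with
    | .inl (i, _) => ⟨i.1 + 1, by have := i.2; omega⟩
    | .inr (.inl _) => ⟨q + 1, by omega⟩
    | .inr (.inr k) => ⟨k.1 + 1, by have := k.2; omega⟩
  len := fun e =>
    match e with
    | .inl _ => l / p
    | .inr (.inl _) => 1 / 2
    | .inr (.inr k) => if k.1 < q then L else (r : ℝ) / 2
  len_nonneg := by
    rintro (⟨i, j⟩ | (x | k))
    · exact div_nonneg hl (Nat.cast_nonneg p)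
    · norm_num
    · dsimp only
      split
      · exact hL
      · positivity

/-! Each edge `w_k` from the centre to a bouquet is a bridge, so the cycle vector of a closed
walk vanishes on it. A closed walk based outside the bouquet `X_i` that uses a circle of `X_i`
crosses `w_i` twice and is therefore longer than `2L`; likewise a closed walk based in `X_i`
that uses a circle of `X_{q+1}`. Hence the cycle vectors of short loops based at `x` are
supported on the `p` circles of `X_i` when `x ∈ X_i`, and on the `r` circles of `X_{q+1}`
otherwise, and linear independence bounds their number by `p` or by `r`. -/

namespace MGraph

/-- `P` is a union of connected components of `G` with the edge `ε` removed. -/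
def IsSeparatedBy (G : MGraph) (ε : G.E) (P : G.V → Prop) : Prop :=
  ∀ e, e ≠ ε → (P (G.s e) ↔ P (G.t e))

variable {G : MGraph}

theorem IsSeparatedBy.compl {ε : G.E} {P : G.V → Prop} (hP : G.IsSeparatedBy ε P) :
    G.IsSeparatedBy ε fun v => ¬ P v :=
  fun e he => not_congr (hP e he)

theorem IsSeparatedBy.dstart_iff_dend {ε : G.E} {P : G.V → Prop} (hP : G.IsSeparatedBy ε P)
    {d : G.E × Bool} (hd : d.1 ≠ ε) : P (G.dstart d) ↔ P (G.dend d) := by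
  rcases d with ⟨e, _ | _⟩
  · exact (hP e hd).symm
  · exact hP e hd

theorem IsWalk.exists_split {u v : G.V} {l₁ l₂ : List (G.E × Bool)}
    (h : G.IsWalk u v (l₁ ++ l₂)) : ∃ w, G.IsWalk u w l₁ ∧ G.IsWalk w v l₂ := by
  induction l₁ generalizing u with
  | nil => exact ⟨u, rfl, h⟩
  | cons d l ih =>
    obtain ⟨w, hw₁, hw₂⟩ := ih h.2
    exact ⟨w, ⟨h.1, hw₁⟩, hw₂⟩

theorem IsWalk.sum_map_sub {u v : G.V} {l : List (G.E × Bool)} (h : G.IsWalk u v l)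
    (φ : G.V → ℝ) : (l.map fun d => φ (G.dend d) - φ (G.dstart d)).sum = φ v - φ u := by
  induction l generalizing u with
  | nil => rw [show u = v from h]; simp
  | cons d l ih =>
    rw [List.map_cons, List.sum_cons, ih h.2, h.1]
    ring

theorem IsSeparatedBy.exists_mem_of_isWalk {ε : G.E} {P : G.V → Prop}
    (hP : G.IsSeparatedBy ε P) {u v : G.V} {l : List (G.E × Bool)} (h : G.IsWalk u v l)
    (hu : P u) (hv : ¬ P v) : ∃ d ∈ l, d.1 = ε := by
  induction l generalizing u with
  | nil => exact absurd ((show u = v from h) ▸ hu) hv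
  | cons d l ih =>
    by_cases hd : d.1 = ε
    · exact ⟨d, List.mem_cons_self, hd⟩
    · obtain ⟨d', hd', hε⟩ := ih h.2 ((hP.dstart_iff_dend hd).mp (h.1 ▸ hu))
      exact ⟨d', List.mem_cons_of_mem _ hd', hε⟩

/-- A closed walk crosses a bridge as often in one direction as in the other. -/
theorem IsSeparatedBy.cycVec_eq_zero {ε : G.E} {P : G.V → Prop} (hP : G.IsSeparatedBy ε P)
    (hs : ¬ P (G.s ε)) (ht : P (G.t ε)) {x : G.V} {l : List (G.E × Bool)}
    (h : G.IsWalk x x l) : G.cycVec l ε = 0 := by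
  classical
  let φ : G.V → ℝ := fun v => if P v then 1 else 0
  have hφ : ∀ d : G.E × Bool,
      (if d.1 = ε then (if d.2 then (1 : ℝ) else -1) else 0) = φ (G.dend d) - φ (G.dstart d) := by
    rintro ⟨e, b⟩
    by_cases he : e = ε
    · subst he
      cases b <;> simp [φ, dstart, dend, hs, ht]
    · simp [φ, he, hP.dstart_iff_dend (d := (e, b)) he]
  rw [cycVec, funext hφ, h.sum_map_sub, sub_self]

theorem len_le_walkLen {d : G.E × Bool} {l : List (G.E × Bool)} (h : d ∈ l) :
    G.len d.1 ≤ G.walkLen l :=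
  List.single_le_sum (by simp [G.len_nonneg]) _ (List.mem_map_of_mem h)

theorem walkLen_append_cons (l₁ l₂ : List (G.E × Bool)) (d : G.E × Bool) :
    G.walkLen (l₁ ++ d :: l₂) = G.walkLen l₁ + G.len d.1 + G.walkLen l₂ := by
  simp only [walkLen, List.map_append, List.map_cons, List.sum_append, List.sum_cons]
  ring

/-- The walk crosses `ε` on its way to `e` and again on its way back. -/
theorem IsSeparatedBy.le_walkLen_of_mem {ε e : G.E} {P : G.V → Prop}
    (hP : G.IsSeparatedBy ε P) (hs : ¬ P (G.s e)) (ht : ¬ P (G.t e))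
    {x : G.V} {l : List (G.E × Bool)} (h : G.IsWalk x x l) (hx : P x)
    {d : G.E × Bool} (hd : d ∈ l) (hde : d.1 = e) :
    2 * G.len ε + G.len e ≤ G.walkLen l := by
  have hstart : ¬ P (G.dstart d) := by rcases d with ⟨_, _ | _⟩ <;> simp_all [dstart]
  have hend : ¬ P (G.dend d) := by rcases d with ⟨_, _ | _⟩ <;> simp_all [dend]
  obtain ⟨l₁, l₂, rfl⟩ := List.append_of_mem hd
  obtain ⟨w, hw₁, hstart_eq, hw₂⟩ := h.exists_split
  obtain ⟨d₁, hd₁, hε₁⟩ := hP.exists_mem_of_isWalk hw₁ hx (hstart_eq ▸ hstart)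
  obtain ⟨d₂, hd₂, hε₂⟩ := hP.compl.exists_mem_of_isWalk hw₂ hend (not_not_intro hx)
  have h₁ : G.len ε ≤ G.walkLen l₁ := hε₁ ▸ len_le_walkLen hd₁
  have h₂ : G.len ε ≤ G.walkLen l₂ := hε₂ ▸ len_le_walkLen hd₂
  rw [walkLen_append_cons, hde]
  linarith

theorem IsSeparatedBy.cycVec_eq_zero_of_walkLen_lt {ε e : G.E} {P : G.V → Prop}
    (hP : G.IsSeparatedBy ε P) (hs : ¬ P (G.s e)) (ht : ¬ P (G.t e))
    {x : G.V} {l : List (G.E × Bool)} (h : G.IsWalk x x l) (hx : P x)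
    (hlt : G.walkLen l < 2 * G.len ε + G.len e) : G.cycVec l e = 0 := by
  refine List.sum_eq_zero fun y hy => ?_
  obtain ⟨d, hd, rfl⟩ := List.mem_map.mp hy
  have hde : d.1 ≠ e := fun hde => (hP.le_walkLen_of_mem hs ht h hx hd hde).not_gt hlt
  simp [hde]

end MGraph

theorem LinearIndependent.card_le_of_forall_notMem_range {K ι κ E : Type*} [Field K]
    [Fintype ι] [Fintype κ] {f : κ → E → K} (hf : LinearIndependent K f) (g : ι → E)
    (hg : ∀ n, ∀ e ∉ Set.range g, f n e = 0) : Fintype.card κ ≤ Fintype.card ι := by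
  have hres : LinearIndependent K fun n => f n ∘ g := by
    rw [Fintype.linearIndependent_iff] at hf ⊢
    intro a ha
    refine hf a (funext fun e => ?_)
    by_cases he : e ∈ Set.range g
    · obtain ⟨j, rfl⟩ := he
      simpa [Finset.sum_apply] using congrFun ha j
    · simp [Finset.sum_apply, hg _ e he]
  simpa using hres.fintype_card_le_finrank

section starGraph

variable {p q r : ℕ} {L l : ℝ} {hL : 0 ≤ L} {hl : 0 ≤ l}

theorem starGraph_s_bridge_ne (k : Fin (q + 1)) :
    (starGraph p q r L l hL hl).s (.inr (.inr k)) ≠ k.succ :=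
  fun h => Nat.succ_ne_zero _ (congrArg Fin.val h).symm

theorem starGraph_isSeparatedBy (k : Fin (q + 1)) :
    (starGraph p q r L l hL hl).IsSeparatedBy (.inr (.inr k)) (· = k.succ) := by
  rintro (⟨i, j⟩ | j | k') hk
  · exact Iff.rfl
  · exact Iff.rfl
  · have hk' : k' ≠ k := fun h => hk (h ▸ rfl)
    exact iff_of_false (starGraph_s_bridge_ne k) fun h => hk' (Fin.succ_injective _ h)

theorem starGraph_len_bridge (i : Fin q) :
    (starGraph p q r L l hL hl).len (.inr (.inr i.castSucc)) = L :=
  if_pos i.isLt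

theorem starGraph_cycVec_bridge {x : (starGraph p q r L l hL hl).V}
    {w : List ((starGraph p q r L l hL hl).E × Bool)}
    (h : (starGraph p q r L l hL hl).IsWalk x x w) (k : Fin (q + 1)) :
    (starGraph p q r L l hL hl).cycVec w (.inr (.inr k)) = 0 :=
  (starGraph_isSeparatedBy k).cycVec_eq_zero (starGraph_s_bridge_ne k) rfl h

theorem starGraph_cycVec_circle (hp : 0 < p) (hl₀ : 0 < l) {x : (starGraph p q r L l hL hl).V}
    {w : List ((starGraph p q r L l hL hl).E × Bool)}
    (h : (starGraph p q r L l hL hl).IsWalk x x w)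
    (hshort : (starGraph p q r L l hL hl).walkLen w ≤ 2 * L)
    (i : Fin q) (j : Fin p) (hx : x ≠ i.castSucc.succ) :
    (starGraph p q r L l hL hl).cycVec w (.inl (i, j)) = 0 := by
  refine (starGraph_isSeparatedBy i.castSucc).compl.cycVec_eq_zero_of_walkLen_lt
    (not_not_intro rfl) (not_not_intro rfl) h hx ?_
  rw [starGraph_len_bridge]
  have : 0 < l / p := by positivity
  exact lt_add_of_le_of_pos hshort this

theorem starGraph_cycVec_tail {x : (starGraph p q r L l hL hl).V}
    {w : List ((starGraph p q r L l hL hl).E × Bool)}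
    (h : (starGraph p q r L l hL hl).IsWalk x x w)
    (hshort : (starGraph p q r L l hL hl).walkLen w ≤ 2 * L)
    (i : Fin q) (j : Fin r) (hx : x = i.castSucc.succ) :
    (starGraph p q r L l hL hl).cycVec w (.inr (.inl j)) = 0 := by
  have hne : (starGraph p q r L l hL hl).s (.inr (.inl j)) ≠ i.castSucc.succ :=
    fun h' => (Nat.succ_lt_succ i.isLt).ne (congrArg Fin.val h').symm
  refine (starGraph_isSeparatedBy i.castSucc).cycVec_eq_zero_of_walkLen_lt hne hne h hx ?_
  rw [starGraph_len_bridge]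
  exact lt_add_of_le_of_pos hshort one_half_pos

end starGraph

theorem starGraph_short_independent_loops_bound_general (p q r : ℕ) (hr : r < p)
    (L l : ℝ) (hL : 0 < L) (hl : 0 < l)
    (k : ℕ) (x : (starGraph p q r L l hL.le hl.le).V)
    (c : Fin k → List ((starGraph p q r L l hL.le hl.le).E × Bool))
    (hbased : ∀ i, (starGraph p q r L l hL.le hl.le).IsWalk x x (c i))
    (hshort : ∀ i, (starGraph p q r L l hL.le hl.le).walkLen (c i) ≤ 2 * L)
    (hind : LinearIndependent ℝ
      (fun i => (starGraph p q r L l hL.le hl.le).cycVec (c i))) :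
    k ≤ p + r ∧ p + r ≤ 2 * p - 1 := by
  have hp : 0 < p := by omega
  refine ⟨?_, by omega⟩
  by_cases hx : ∃ i₀ : Fin q, x = i₀.castSucc.succ
  · obtain ⟨i₀, hx⟩ := hx
    have hk := hind.card_le_of_forall_notMem_range (fun j : Fin p => .inl (i₀, j)) <| by
      rintro n (⟨i, j⟩ | j | b) he
      · refine starGraph_cycVec_circle hp hl (hbased n) (hshort n) i j ?_
        rintro rfl
        exact he ⟨j, by rw [Fin.succ_injective _ (Fin.castSucc_injective _ hx)]⟩
      · exact starGraph_cycVec_tail (hbased n) (hshort n) i₀ j hx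
      · exact starGraph_cycVec_bridge (hbased n) b
    simp only [Fintype.card_fin] at hk
    omega
  · have hk := hind.card_le_of_forall_notMem_range (fun j : Fin r => .inr (.inl j)) <| by
      rintro n (⟨i, j⟩ | j | b) he
      · exact starGraph_cycVec_circle hp hl (hbased n) (hshort n) i j fun h => hx ⟨i, h⟩
      · exact absurd ⟨j, rfl⟩ he
      · exact starGraph_cycVec_bridge (hbased n) b
    simp only [Fintype.card_fin] at hk
    omega

/-- In the graph `Γ_⋆` (`q` bouquets of `p` circles and one bouquet of
`r` circles joined to a center by edges of length `L`), any family of homologically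
independent loops based at a common point, each of length at most `2L`, has
cardinality at most `p + r`, which is at most `2p − 1`. -/
theorem starGraph_short_independent_loops_bound (m p q r : ℕ) (hp : 1 ≤ p)
    (hpm : p ≤ m) (hm : m = p * q + r) (hr : r < p)
    (L l : ℝ) (hL : 0 < L) (hl : 0 < l)
    (k : ℕ) (x : (starGraph p q r L l hL.le hl.le).V)
    (c : Fin k → List ((starGraph p q r L l hL.le hl.le).E × Bool))
    (hbased : ∀ i, (starGraph p q r L l hL.le hl.le).IsWalk x x (c i))
    (hshort : ∀ i, (starGraph p q r L l hL.le hl.le).walkLen (c i) ≤ 2 * L)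
    (hind : LinearIndependent ℝ
      (fun i => (starGraph p q r L l hL.le hl.le).cycVec (c i))) :
    k ≤ p + r ∧ p + r ≤ 2 * p - 1 :=
  starGraph_short_independent_loops_bound_general p q r hr L l hL hl k x c hbased hshort hind
end
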